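/- Let R be a Dedekind domain and I a nonzero ideal of finite index. Then the number of primitive k-tuples in R/I equals N(I)^k · ∏_{P | I} (1 - 1/N(P)^k), where the product is over prime ideals P dividing I and N denotes the absolute norm (index). -/

import Mathlib

/-!
By the Chinese remainder theorem `R ⧸ I ≅ ∏_{P ∣ I} R ⧸ P ^ e_P`, and a tuple is primitive iff
each of its components is, so the count is multiplicative. Each `A = R ⧸ P ^ e` with `e ≠ 0` is
a finite local ring with residue field `R ⧸ P`; there a tuple is primitive iff some entry lies
outside the maximal ideal `𝔪`, so the count is `|A|^k - |𝔪|^k = |A|^k (1 - 1/|A ⧸ 𝔪|^k)`.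
-/

open IsLocalRing UniqueFactorizationMonoid

section Transfer

variable {A B : Type*} [CommRing A] [CommRing B]

theorem span_range_eq_top_iff_of_ringEquiv {ι : Type*} (f : A ≃+* B) (a : ι → A) :
    Ideal.span (Set.range (f ∘ a)) = ⊤ ↔ Ideal.span (Set.range a) = ⊤ := by
  rw [Set.range_comp, ← Ideal.map_span, ← Ideal.comap_symm, Ideal.comap_eq_top_iff]

theorem card_primitive_congr (k : ℕ) (f : A ≃+* B) :
    Nat.card {a : Fin k → A // Ideal.span (Set.range a) = ⊤} =
      Nat.card {b : Fin k → B // Ideal.span (Set.range b) = ⊤} :=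
  Nat.card_congr <| ((Equiv.refl (Fin k)).arrowCongr f.toEquiv).subtypeEquiv fun a =>
    (span_range_eq_top_iff_of_ringEquiv f a).symm

end Transfer

section Pi

variable {ι : Type*} {A : ι → Type*} [∀ i, CommRing (A i)]

theorem span_range_eq_top_iff_forall_pi {κ : Type*} [Fintype κ] (a : κ → ∀ i, A i) :
    Ideal.span (Set.range a) = ⊤ ↔ ∀ i, Ideal.span (Set.range fun j => a j i) = ⊤ := by
  simp only [Ideal.eq_top_iff_one, Ideal.mem_span_range_iff_exists_fun, funext_iff,
    Finset.sum_apply, Pi.mul_apply, Pi.one_apply]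
  refine ⟨fun ⟨c, hc⟩ i => ⟨fun j => c j i, hc i⟩, fun h => ?_⟩
  choose c hc using h
  exact ⟨fun j i => c i j, hc⟩

theorem card_primitive_pi [Fintype ι] (k : ℕ) :
    Nat.card {a : Fin k → ∀ i, A i // Ideal.span (Set.range a) = ⊤} =
      ∏ i, Nat.card {b : Fin k → A i // Ideal.span (Set.range b) = ⊤} := by
  rw [← Nat.card_pi]
  exact Nat.card_congr <| ((Equiv.piComm fun _ i => A i).subtypeEquiv
    span_range_eq_top_iff_forall_pi).trans Equiv.subtypePiEquivPi

end Pi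

section LocalRing

variable {A : Type*} [CommRing A] [IsLocalRing A]

theorem span_range_ne_top_iff_forall_mem_maximalIdeal {ι : Type*} (a : ι → A) :
    Ideal.span (Set.range a) ≠ ⊤ ↔ ∀ j, a j ∈ maximalIdeal A := by
  refine Iff.trans ?_ (Ideal.span_le.trans Set.range_subset_iff)
  exact ⟨le_maximalIdeal, fun h htop =>
    (maximalIdeal.isMaximal A).ne_top (top_le_iff.mp (htop ▸ h))⟩

theorem card_primitive_add_card_maximalIdeal_pow [Finite A] (k : ℕ) :
    Nat.card {a : Fin k → A // Ideal.span (Set.range a) = ⊤} + Nat.card (maximalIdeal A) ^ k =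
      Nat.card A ^ k := by
  classical
  have hprim : {a : Fin k → A // Ideal.span (Set.range a) = ⊤} ≃
      {a : Fin k → A // ¬ ∀ j, a j ∈ maximalIdeal A} :=
    Equiv.subtypeEquivRight fun a => by
      rw [← span_range_ne_top_iff_forall_mem_maximalIdeal, not_not]
  have hnonprim : Nat.card {a : Fin k → A // ∀ j, a j ∈ maximalIdeal A} =
      Nat.card (maximalIdeal A) ^ k := by
    rw [Nat.card_congr Equiv.subtypePiEquivPi, Nat.card_fun, Nat.card_fin]
  rw [Nat.card_congr hprim, ← hnonprim, add_comm, ← Nat.card_sum,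
    Nat.card_congr (Equiv.sumCompl _), Nat.card_fun, Nat.card_fin]

theorem card_primitive_of_isLocalRing [Finite A] (k : ℕ) :
    (Nat.card {a : Fin k → A // Ideal.span (Set.range a) = ⊤} : ℚ) =
      Nat.card A ^ k * (1 - 1 / Nat.card (ResidueField A) ^ k) := by
  have hA : Nat.card A = Nat.card (maximalIdeal A) * Nat.card (ResidueField A) :=
    Submodule.card_eq_card_quotient_mul_card (maximalIdeal A)
  have : Finite (ResidueField A) := .of_surjective _ residue_surjective
  have hres : (Nat.card (ResidueField A) : ℚ) ≠ 0 := by exact_mod_cast Nat.card_pos.ne'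
  have hcount : (Nat.card {a : Fin k → A // Ideal.span (Set.range a) = ⊤} : ℚ) +
      (Nat.card (maximalIdeal A) : ℚ) ^ k = (Nat.card A : ℚ) ^ k := by
    exact_mod_cast card_primitive_add_card_maximalIdeal_pow k
  rw [eq_sub_of_add_eq hcount, hA]
  field_simp
  push_cast
  ring

end LocalRing

namespace Ideal

variable {R : Type*} [CommRing R] (P : Ideal R) [P.IsMaximal] (e : ℕ)

theorem map_mk_pow_eq_of_isPrime (M : Ideal (R ⧸ P ^ e)) [M.IsPrime] :
    P.map (Quotient.mk (P ^ e)) = M := by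
  have hPe : P ^ e ≤ M.comap (Quotient.mk (P ^ e)) := fun x hx => by
    simp [Quotient.eq_zero_iff_mem.mpr hx]
  have hP : P = M.comap (Quotient.mk (P ^ e)) :=
    IsMaximal.eq_of_le ‹_› (IsPrime.comap _).ne_top ((IsPrime.comap _).le_of_pow_le hPe)
  have := map_comap_of_surjective _ Quotient.mk_surjective M
  rwa [← hP] at this

instance isLocalRing_quotient_pow [NeZero e] : IsLocalRing (R ⧸ P ^ e) := by
  have : Nontrivial (R ⧸ P ^ e) := Quotient.nontrivial_iff.mpr
    (ne_top_of_le_ne_top (IsMaximal.ne_top ‹_›) (pow_le_self (NeZero.ne e)))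
  obtain ⟨M, hM⟩ := exists_maximal (R ⧸ P ^ e)
  refine .of_unique_max_ideal
    ⟨P.map (Quotient.mk _), ?_, fun N _ => (map_mk_pow_eq_of_isPrime P e N).symm⟩
  rwa [map_mk_pow_eq_of_isPrime P e M]

theorem card_residueField_quotient_pow [NeZero e] :
    Nat.card (IsLocalRing.ResidueField (R ⧸ P ^ e)) = Nat.card (R ⧸ P) := by
  rw [IsLocalRing.ResidueField, ← map_mk_pow_eq_of_isPrime P e (maximalIdeal _)]
  exact Nat.card_congr (DoubleQuot.quotQuotEquivQuotOfLE (pow_le_self (NeZero.ne e))).toEquiv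

theorem card_primitive_quotient_pow [NeZero e] [Finite (R ⧸ P ^ e)] (k : ℕ) :
    (Nat.card {a : Fin k → R ⧸ P ^ e // span (Set.range a) = ⊤} : ℚ) =
      Nat.card (R ⧸ P ^ e) ^ k * (1 - 1 / Nat.card (R ⧸ P) ^ k) := by
  rw [card_primitive_of_isLocalRing, card_residueField_quotient_pow]

end Ideal

section Dedekind

variable {R : Type*} [CommRing R] [IsDedekindDomain R] {I : Ideal R}

theorem eq_toFinset_normalizedFactors_of_mem_iff (hI : I ≠ ⊥) {S : Finset (Ideal R)}
    (hS : ∀ P : Ideal R, P ∈ S ↔ P.IsPrime ∧ I ≤ P) :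
    S = (normalizedFactors I).toFinset := by
  ext P
  rw [hS, Multiset.mem_toFinset, Ideal.mem_normalizedFactors_iff hI]

theorem prod_pow_count_normalizedFactors (hI : I ≠ ⊥) :
    ∏ P ∈ (normalizedFactors I).toFinset, P ^ (normalizedFactors I).count P = I := by
  rw [← Finset.prod_multiset_count, Ideal.prod_normalizedFactors_eq_self hI]

end Dedekind

theorem card_primitive_tuples_dedekind_general {R : Type*} [CommRing R]
    [IsDedekindDomain R] (I : Ideal R) (hI : I ≠ ⊥) [Finite (R ⧸ I)] (k : ℕ)
    (S : Finset (Ideal R)) (hS : ∀ P : Ideal R, P ∈ S ↔ P.IsPrime ∧ I ≤ P) :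
    (Nat.card {a : Fin k → R ⧸ I // Ideal.span (Set.range a) = ⊤} : ℚ) =
      (Nat.card (R ⧸ I) : ℚ) ^ k * ∏ P ∈ S, (1 - 1 / (Nat.card (R ⧸ P) : ℚ) ^ k) := by
  classical
  obtain rfl := eq_toFinset_normalizedFactors_of_mem_iff hI hS
  set e : Ideal R → ℕ := (normalizedFactors I).count
  have hprime : ∀ P ∈ (normalizedFactors I).toFinset, Prime P := fun P hP =>
    prime_of_normalized_factor P (Multiset.mem_toFinset.mp hP)
  let f : R ⧸ I ≃+* ∀ P : (normalizedFactors I).toFinset, R ⧸ (P : Ideal R) ^ e P :=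
    IsDedekindDomain.quotientEquivPiOfFinsetProdEq I id e hprime (fun _ _ _ _ => id)
      (prod_pow_count_normalizedFactors hI)
  rw [card_primitive_congr k f, card_primitive_pi, Nat.card_congr f.toEquiv, Nat.card_pi]
  push_cast
  rw [← Finset.prod_pow, ← Finset.prod_coe_sort _ fun P => 1 - 1 / (Nat.card (R ⧸ P) : ℚ) ^ k,
    ← Finset.prod_mul_distrib]
  refine Finset.prod_congr rfl fun P _ => ?_
  have hP := hprime P P.2
  have : (P : Ideal R).IsMaximal := (Ideal.isPrime_of_prime hP).isMaximal hP.ne_zero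
  have : NeZero (e P) := ⟨Multiset.count_ne_zero.mpr (Multiset.mem_toFinset.mp P.2)⟩
  have : Finite (R ⧸ (P : Ideal R) ^ e P) :=
    .of_surjective _ ((Function.surjective_eval P).comp f.surjective)
  exact Ideal.card_primitive_quotient_pow (P : Ideal R) (e P) k

/-- In a Dedekind domain `R` with a nonzero ideal `I` of finite index, the number of
primitive `k`-tuples of `R ⧸ I` equals `N(I)^k · ∏_{P ∣ I} (1 - 1/N(P)^k)`, where the
product runs over the prime ideals containing (i.e. dividing) `I` and `N` is the index. -/
theorem card_primitive_tuples_dedekind {R : Type*} [CommRing R] [IsDomain R]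
    [IsDedekindDomain R] (I : Ideal R) (hI : I ≠ ⊥) [Finite (R ⧸ I)] (k : ℕ)
    (S : Finset (Ideal R)) (hS : ∀ P : Ideal R, P ∈ S ↔ P.IsPrime ∧ I ≤ P) :
    (Nat.card {a : Fin k → R ⧸ I // Ideal.span (Set.range a) = ⊤} : ℚ) =
      (Nat.card (R ⧸ I) : ℚ) ^ k * ∏ P ∈ S, (1 - 1 / (Nat.card (R ⧸ P) : ℚ) ^ k) :=
  card_primitive_tuples_dedekind_general I hI k S hS
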